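/- arXiv:2406.05637 — 11 statements merged into one kernel-verified Lean document; each statement's English description precedes it below -/
import Mathlib

section
/- Let $\{a_k\}$ be a sequence of reals satisfying $a_{k+1} \le (1 - 1/s(b_k)) a_k + 1/t(b_k)$ for all $k \in \{0,\dots,K\}$, where $b_k$ lies in an interval $I$ on which $s(x) \ge 1$, $t(x) > 0$, and $r := s/t$ is convex and differentiable. Set $u := r' \cdot t$. Suppose there is a non-decreasing sequence $\{\lambda_k\} \subseteq \mathbb{R}_{++}$ such that $(b_{k+1} - b_k) u(b_k) \ge -1 + 1/\lambda_{k+1}$ for all $k \in \{0,\dots,K-1\}$. Then for all $k \in \{0,\dots,K-1\}$: $a_{k+1} \le \lambda_{k+1} r(b_{k+1}) + (a_0 - \lambda_0 r(b_0)) \prod_{i=0}^{k} (1 - 1/s(b_i))$. -/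
open Finset

/-- Tangent line inequality for a convex function. -/
lemma tangent_le {S : Set ℝ} {f : ℝ → ℝ} {f' x y : ℝ} (hfc : ConvexOn ℝ S f)
    (hx : x ∈ S) (hy : y ∈ S) (hd : HasDerivAt f f' x) :
    f x + f' * (y - x) ≤ f y := by
  rcases lt_trichotomy x y with h | h | h
  · have hsl := hfc.le_slope_of_hasDerivAt hx hy h hd
    rw [slope_def_field] at hsl
    have hxy : 0 < y - x := by linarith
    have := (le_div_iff₀ hxy).mp hsl
    linarith
  · simp [h]
  · have hsl := hfc.slope_le_of_hasDerivAt hy hx h hd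
    rw [slope_def_field] at hsl
    have hxy : 0 < x - y := by linarith
    have := (div_le_iff₀ hxy).mp hsl
    nlinarith
/-- Generalized Chung's Lemma (differentiable version). -/
theorem generalized_chung_differentiable
    (K : ℕ) (a b : ℕ → ℝ) (s t r r' : ℝ → ℝ) (I : Set ℝ)
    (hr : ∀ x ∈ I, r x = s x / t x)
    (hbI : ∀ k ≤ K, b k ∈ I)
    (hs : ∀ x ∈ I, 1 ≤ s x)
    (ht : ∀ x ∈ I, 0 < t x)
    (hconv : ConvexOn ℝ I r)
    (hderiv : ∀ x ∈ I, HasDerivAt r (r' x) x)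
    (hrec : ∀ k ≤ K, a (k + 1) ≤ (1 - 1 / s (b k)) * a k + 1 / t (b k))
    (lam : ℕ → ℝ)
    (hlam_pos : ∀ k, 0 < lam k)
    (hlam_mono : Monotone lam)
    (hcond : ∀ k, k + 1 ≤ K →
      (b (k + 1) - b k) * (r' (b k) * t (b k)) ≥ -1 + 1 / lam (k + 1)) :
    ∀ k, k + 1 ≤ K →
      a (k + 1) ≤ lam (k + 1) * r (b (k + 1)) +
        (a 0 - lam 0 * r (b 0)) * ∏ i ∈ range (k + 1), (1 - 1 / s (b i)) := by
  -- key step inequality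
  have key : ∀ k, k + 1 ≤ K →
      (1 - 1 / s (b k)) * (lam k * r (b k)) + 1 / t (b k) ≤
        lam (k + 1) * r (b (k + 1)) := by
    intro k hk
    have hbk := hbI k (by omega)
    have hbk1 := hbI (k + 1) hk
    have hsk := hs _ hbk
    have htk := ht _ hbk
    have hl1 := hlam_pos (k + 1)
    have hlm := hlam_mono (Nat.le_succ k)
    have htan := tangent_le hconv hbk hbk1 (hderiv _ hbk)
    have hc := hcond k hk
    have hlne : lam (k + 1) ≠ 0 := hl1.ne'
    have htne : t (b k) ≠ 0 := htk.ne'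
    have hsne : s (b k) ≠ 0 := by linarith
    have hA : 1 - lam (k + 1) ≤
        lam (k + 1) * ((b (k + 1) - b k) * (r' (b k) * t (b k))) := by
      have h := mul_le_mul_of_nonneg_left hc hl1.le
      have he : lam (k + 1) * (-1 + 1 / lam (k + 1)) = 1 - lam (k + 1) := by
        field_simp
        ring
      linarith
    have hrk : r (b k) = s (b k) / t (b k) := hr _ hbk
    have goal' : lam k * (s (b k) - 1) + 1 ≤
        lam (k + 1) * (s (b k) + r' (b k) * (b (k + 1) - b k) * t (b k)) := by
      nlinarith [mul_nonneg (sub_nonneg.2 hlm) (sub_nonneg.2 hsk)]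
    have h2 : lam (k + 1) * (r (b k) + r' (b k) * (b (k + 1) - b k)) ≤
        lam (k + 1) * r (b (k + 1)) :=
      mul_le_mul_of_nonneg_left (by linarith) hl1.le
    refine le_trans ?_ h2
    calc (1 - 1 / s (b k)) * (lam k * r (b k)) + 1 / t (b k)
        = (lam k * (s (b k) - 1) + 1) / t (b k) := by
          rw [hrk]; field_simp
      _ ≤ (lam (k + 1) * (s (b k) + r' (b k) * (b (k + 1) - b k) * t (b k))) / t (b k) := by
          gcongr
      _ = lam (k + 1) * (r (b k) + r' (b k) * (b (k + 1) - b k)) := by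
          rw [hrk]; field_simp
  intro k
  induction k with
  | zero =>
    intro hk
    have hb0 := hbI 0 (by omega)
    have hs0 := hs _ hb0
    have hrec0 := hrec 0 (by omega)
    have hkey := key 0 hk
    rw [prod_range_one]
    nlinarith
  | succ n ih =>
    intro hk
    have ihn := ih (by omega)
    have hb := hbI (n + 1) (by omega)
    have hsn := hs _ hb
    have hf : (0:ℝ) ≤ 1 - 1 / s (b (n + 1)) := by
      have : 1 / s (b (n + 1)) ≤ 1 := by
        rw [div_le_one (by linarith)]; linarith
      linarith
    have hrecn := hrec (n + 1) (by omega)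
    have hkey := key (n + 1) hk
    rw [prod_range_succ]
    have hmul := mul_le_mul_of_nonneg_left ihn hf
    nlinarith
end

section
/- Let $\{a_k\}$ be a sequence of reals satisfying $a_{k+1} \le (1 - 1/s(b_k)) a_k + 1/t(b_k)$ for all $k \in \{0,\dots,K\}$, where $b_k \in I$, $s(x) \ge 1$ and $t(x) > 0$ on $I$, and $r := s/t$ is convex on $I$. Suppose there exist subgradients $g_k \in \partial r(b_k)$ and a non-decreasing positive sequence $\{\lambda_k\}$ such that $(b_{k+1} - b_k)\, g_k\, t(b_k) \ge -1 + 1/\lambda_{k+1}$ for all $k \le K-1$. Then $a_{k+1} \le \lambda_{k+1} r(b_{k+1}) + (a_0 - \lambda_0 r(b_0)) \prod_{i=0}^{k} (1 - 1/s(b_i))$ for all $k \le K-1$. -/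
open Finset

/-- Generalized Chung's Lemma (subgradient version). -/
theorem generalized_chung_subgradient
    (K : ℕ) (a b : ℕ → ℝ) (s t r : ℝ → ℝ) (g : ℕ → ℝ) (I : Set ℝ)
    (hr : ∀ x ∈ I, r x = s x / t x)
    (hbI : ∀ k ≤ K, b k ∈ I)
    (hs : ∀ x ∈ I, 1 ≤ s x)
    (ht : ∀ x ∈ I, 0 < t x)
    (hconv : ConvexOn ℝ I r)
    (hsub : ∀ k ≤ K, ∀ y ∈ I, r y ≥ r (b k) + g k * (y - b k))
    (hrec : ∀ k ≤ K, a (k + 1) ≤ (1 - 1 / s (b k)) * a k + 1 / t (b k))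
    (lam : ℕ → ℝ)
    (hlam_pos : ∀ k, 0 < lam k)
    (hlam_mono : Monotone lam)
    (hcond : ∀ k, k + 1 ≤ K →
      (b (k + 1) - b k) * g k * t (b k) ≥ -1 + 1 / lam (k + 1)) :
    ∀ k, k + 1 ≤ K →
      a (k + 1) ≤ lam (k + 1) * r (b (k + 1)) +
        (a 0 - lam 0 * r (b 0)) * ∏ i ∈ range (k + 1), (1 - 1 / s (b i)) := by
  have hkey : ∀ k, k + 1 ≤ K →
      (1 - 1 / s (b k)) * (lam k * r (b k)) + 1 / t (b k) ≤
        lam (k + 1) * r (b (k + 1)) := by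
    intro k hk
    have hbk := hbI k (by omega)
    have hbk1 := hbI (k + 1) hk
    have hsk := hs _ hbk
    have htk := ht _ hbk
    have hrk := hr _ hbk
    have hS : (0:ℝ) < s (b k) := by linarith
    have h1 := hsub k (by omega) (b (k + 1)) hbk1
    have h2 := hcond k hk
    have hL : 0 < lam (k + 1) := hlam_pos (k + 1)
    have hL0 : 0 < lam k := hlam_pos k
    have hLm : lam k ≤ lam (k + 1) := hlam_mono (Nat.le_succ k)
    have hinv : lam (k + 1) * (1 / lam (k + 1)) = 1 := by field_simp
    -- multiply hcond by lam (k+1)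
    have h2' : lam (k + 1) * ((b (k + 1) - b k) * g k * t (b k)) ≥ 1 - lam (k + 1) := by
      nlinarith [h2, hL, hinv]
    rw [hrk] at h1 ⊢
    have hST : s (b k) / t (b k) * t (b k) = s (b k) :=
      div_mul_cancel₀ _ (ne_of_gt htk)
    have hrewr : (1 - 1 / s (b k)) * (lam k * (s (b k) / t (b k))) + 1 / t (b k)
        = (lam k * (s (b k) - 1) + 1) / t (b k) := by
      field_simp
    rw [hrewr, div_le_iff₀ htk]
    have h1' := mul_le_mul_of_nonneg_left h1 (le_of_lt (mul_pos hL htk))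
    nlinarith [h1', h2', hST, hsk, hLm, htk]
  intro k hk
  induction k with
  | zero =>
    have hrec0 := hrec 0 (by omega)
    have hkey0 := hkey 0 hk
    rw [prod_range_one]
    nlinarith [hrec0, hkey0]
  | succ n ih =>
    have ihn := ih (by omega)
    have hbn := hbI (n + 1) (by omega)
    have hsn := hs _ hbn
    have hSn : (0:ℝ) < s (b (n + 1)) := by linarith
    have hc0 : 0 ≤ 1 - 1 / s (b (n + 1)) := by
      have : 1 / s (b (n + 1)) ≤ 1 := by
        rw [div_le_one hSn]; linarith
      linarith
    have hrecn := hrec (n + 1) (by omega)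
    have hkeyn := hkey (n + 1) hk
    have h2 := mul_le_mul_of_nonneg_left ihn hc0
    rw [prod_range_succ]
    nlinarith [hrecn, hkeyn, h2]
end

section
/- Let $\{a_k\}$ be a sequence of positive reals satisfying $a_{k+1} \le (1 - c/(k+\gamma)) a_k + d/(k+\gamma)^{1+q}$ for all $k$, where $c > q > 0$, $d > 0$, and $\gamma \ge c$. Then for all $k \ge 0$: $a_{k+1} \le \frac{d}{c-q}(k+1+\gamma)^{-q} + \gamma^c \max\{a_0 - \frac{d}{(c-q)\gamma^q}, 0\}\, (k+1+\gamma)^{-c}$. -/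
/-- Key decay step: for `0 < p ≤ t`, `(1 - p/t) * t^(-p) ≤ (t+1)^(-p)`. -/
lemma chung_key_step (p t : ℝ) (hp : 0 < p) (hpt : p ≤ t) :
    (1 - p / t) * t ^ (-p) ≤ (t + 1) ^ (-p) := by
  have ht : 0 < t := lt_of_lt_of_le hp hpt
  rcases eq_or_lt_of_le hpt with h | h
  · have : 1 - p / t = 0 := by rw [h, div_self ht.ne', sub_self]
    rw [this, zero_mul]
    positivity
  · have h1 : 0 < 1 - p / t := by
      have : p / t < 1 := (div_lt_one ht).mpr h
      linarith
    have hlog1 : Real.log (1 - p / t) ≤ -(p / t) := by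
      have := Real.log_le_sub_one_of_pos h1
      linarith
    have hlog2 : Real.log (1 + 1 / t) ≤ 1 / t := by
      have h2 : (0 : ℝ) < 1 + 1 / t := by positivity
      have := Real.log_le_sub_one_of_pos h2
      linarith
    have hmain : (1 - p / t) ≤ ((t + 1) / t) ^ (-p) := by
      have hbase : (0 : ℝ) < (t + 1) / t := by positivity
      rw [Real.rpow_def_of_pos hbase]
      calc (1 - p / t) = Real.exp (Real.log (1 - p / t)) := (Real.exp_log h1).symm
        _ ≤ Real.exp (Real.log ((t + 1) / t) * (-p)) := by
            apply Real.exp_le_exp.mpr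
            have heq : (t + 1) / t = 1 + 1 / t := by field_simp
            rw [heq]
            have : p * Real.log (1 + 1 / t) ≤ p * (1 / t) :=
              mul_le_mul_of_nonneg_left hlog2 hp.le
            have hpt' : -(p / t) = -(p * (1 / t)) := by ring
            nlinarith [hlog1]
    have hdiv : ((t + 1) / t) ^ (-p) = (t + 1) ^ (-p) / t ^ (-p) :=
      Real.div_rpow (by linarith) ht.le _
    rw [hdiv] at hmain
    have htp : (0 : ℝ) < t ^ (-p) := Real.rpow_pos_of_pos ht _
    calc (1 - p / t) * t ^ (-p) ≤ ((t + 1) ^ (-p) / t ^ (-p)) * t ^ (-p) :=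
          mul_le_mul_of_nonneg_right hmain htp.le
      _ = (t + 1) ^ (-p) := div_mul_cancel₀ _ (ne_of_gt htp)

/-- Non-asymptotic Chung's Lemma, case ν = 1. -/
theorem nonasymptotic_chung_nu_one
    (a : ℕ → ℝ) (c d q γ : ℝ)
    (hq : 0 < q) (hcq : q < c) (hd : 0 < d) (hγ : c ≤ γ)
    (hpos : ∀ k, 0 < a k)
    (hrec : ∀ k : ℕ, a (k + 1) ≤ (1 - c / ((k : ℝ) + γ)) * a k +
      d / ((k : ℝ) + γ) ^ ((1 : ℝ) + q)) :
    ∀ k : ℕ, a (k + 1) ≤ d / (c - q) * ((k : ℝ) + 1 + γ) ^ (-q) +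
      γ ^ c * max (a 0 - d / ((c - q) * γ ^ q)) 0 * ((k : ℝ) + 1 + γ) ^ (-c) := by
  have hc : 0 < c := hq.trans hcq
  have hγ0 : 0 < γ := lt_of_lt_of_le hc hγ
  have hcq' : 0 < c - q := by linarith
  set M := max (a 0 - d / ((c - q) * γ ^ q)) 0 with hMdef
  have hM0 : 0 ≤ M := le_max_right _ _
  have main : ∀ k : ℕ, a k ≤ d / (c - q) * ((k : ℝ) + γ) ^ (-q) +
      γ ^ c * M * ((k : ℝ) + γ) ^ (-c) := by
    intro k
    induction k with
    | zero =>
        simp only [Nat.cast_zero, zero_add]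
        have hγc : γ ^ c * M * γ ^ (-c) = M := by
          rw [mul_comm (γ ^ c) M, mul_assoc, ← Real.rpow_add hγ0]
          simp
        have hγq : d / (c - q) * γ ^ (-q) = d / ((c - q) * γ ^ q) := by
          rw [Real.rpow_neg hγ0.le]
          field_simp
        rw [hγc, hγq]
        have : a 0 - d / ((c - q) * γ ^ q) ≤ M := le_max_left _ _
        linarith
    | succ k ih =>
        set t : ℝ := (k : ℝ) + γ with htdef
        have htc : c ≤ t := by
          have : (0 : ℝ) ≤ (k : ℝ) := Nat.cast_nonneg k
          simp only [htdef]; linarith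
        have ht : 0 < t := lt_of_lt_of_le hc htc
        have htq : q ≤ t := le_trans hcq.le htc
        have hcoef : 0 ≤ 1 - c / t := by
          have : c / t ≤ 1 := (div_le_one ht).mpr htc
          linarith
        have hcast : ((k + 1 : ℕ) : ℝ) + γ = t + 1 := by
          push_cast; simp only [htdef]; ring
        rw [hcast]
        have hrec' := hrec k
        have hA : (1 - c / t) * a k ≤
            (1 - c / t) * (d / (c - q) * t ^ (-q) + γ ^ c * M * t ^ (-c)) :=
          mul_le_mul_of_nonneg_left ih hcoef
        have hpow : d / t ^ ((1 : ℝ) + q) = (d / t) * t ^ (-q) := by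
          rw [Real.rpow_add ht, Real.rpow_one, Real.rpow_neg ht.le]
          field_simp
        have step1 : a (k + 1) ≤
            (1 - c / t) * (d / (c - q) * t ^ (-q) + γ ^ c * M * t ^ (-c))
              + (d / t) * t ^ (-q) := by
          calc a (k + 1) ≤ (1 - c / t) * a k + d / t ^ ((1 : ℝ) + q) := hrec' 
            _ ≤ _ := by rw [hpow]; linarith
        have hAeq : (1 - c / t) * (d / (c - q) * t ^ (-q)) + (d / t) * t ^ (-q)
            = d / (c - q) * ((1 - q / t) * t ^ (-q)) := by
          have : (1 - c / t) * (d / (c - q)) + d / t = d / (c - q) * (1 - q / t) := by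
            field_simp
            ring
          nlinarith [this, Real.rpow_pos_of_pos ht (-q)]
        have hkeyq : d / (c - q) * ((1 - q / t) * t ^ (-q)) ≤
            d / (c - q) * (t + 1) ^ (-q) := by
          apply mul_le_mul_of_nonneg_left (chung_key_step q t hq htq)
          positivity
        have hkeyc : γ ^ c * M * ((1 - c / t) * t ^ (-c)) ≤
            γ ^ c * M * (t + 1) ^ (-c) := by
          apply mul_le_mul_of_nonneg_left (chung_key_step c t hc htc)
          positivity
        calc a (k + 1)
            ≤ (1 - c / t) * (d / (c - q) * t ^ (-q) + γ ^ c * M * t ^ (-c))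
              + (d / t) * t ^ (-q) := step1
          _ = d / (c - q) * ((1 - q / t) * t ^ (-q))
              + γ ^ c * M * ((1 - c / t) * t ^ (-c)) := by
                rw [← hAeq]; ring
          _ ≤ d / (c - q) * (t + 1) ^ (-q) + γ ^ c * M * (t + 1) ^ (-c) := by
                linarith [hkeyq, hkeyc]
  intro k
  have h := main (k + 1)
  have hcast : ((k + 1 : ℕ) : ℝ) + γ = (k : ℝ) + 1 + γ := by push_cast; ring
  rw [hcast] at h
  exact h
end

section
/- Let $\{a_k\}$ be a sequence of positive reals satisfying $a_{k+1} \le (1 - c/(k+\gamma)^{\nu}) a_k + d/(k+\gamma)^{\nu+q}$ for all $k \in \{0,\dots,K\}$, where $\nu \in (0,1)$, $q, c, d > 0$, $\gamma \ge c^{1/\nu}$ and $\gamma > (q/c)^{1/(1-\nu)}$. Let $\lambda = \frac{c\gamma^{1-\nu}}{c\gamma^{1-\nu} - q}$. Then for all $k \in \{0,\dots,K\}$: $a_{k+1} \le \frac{\lambda d}{c}(k+1+\gamma)^{-q} + \max\{a_0 - \frac{\lambda d}{c\gamma^q}, 0\} \exp\big(\frac{c\gamma^{1-\nu}}{1-\nu}\big)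 \exp\big(-\frac{c(k+1+\gamma)^{1-\nu}}{1-\nu}\big)$. -/
set_option maxHeartbeats 1000000

open Real

/-- Bernoulli-type inequality for negative exponents: `1 - q*t ≤ (1+t)^(-q)`. -/
lemma bern_neg_aux {t q : ℝ} (ht : 0 ≤ t) (hq : 0 ≤ q) :
    1 - q * t ≤ (1 + t) ^ (-q : ℝ) := by
  have h1 : (0:ℝ) < 1 + t := by linarith
  have hlog : Real.log (1 + t) ≤ t := by
    have := Real.log_le_sub_one_of_pos h1; linarith
  have hlognn : 0 ≤ Real.log (1 + t) := Real.log_nonneg (by linarith)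
  rw [Real.rpow_def_of_pos h1, mul_comm (Real.log (1 + t)) (-q)]
  have h2 : 1 + (-q * Real.log (1 + t)) ≤ Real.exp (-q * Real.log (1 + t)) := by
    have := Real.add_one_le_exp (-q * Real.log (1 + t)); linarith
  have h3 : q * Real.log (1 + t) ≤ q * t := mul_le_mul_of_nonneg_left hlog hq
  linarith

/-- Non-asymptotic Chung's Lemma, case ν ∈ (0,1). -/
theorem nonasymptotic_chung_nu_lt_one
    (K : ℕ) (a : ℕ → ℝ) (c d q ν γ : ℝ)
    (hν : ν ∈ Set.Ioo (0 : ℝ) 1) (hq : 0 < q) (hc : 0 < c) (hd : 0 < d)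
    (hγ1 : c ^ (1 / ν) ≤ γ) (hγ2 : (q / c) ^ (1 / (1 - ν)) < γ)
    (hpos : ∀ k, 0 < a k)
    (hrec : ∀ k ≤ K, a (k + 1) ≤ (1 - c / ((k : ℝ) + γ) ^ ν) * a k +
      d / ((k : ℝ) + γ) ^ (ν + q)) :
    ∀ k ≤ K,
      a (k + 1) ≤ (c * γ ^ (1 - ν) / (c * γ ^ (1 - ν) - q)) * d / c *
          ((k : ℝ) + 1 + γ) ^ (-q) +
        max (a 0 - (c * γ ^ (1 - ν) / (c * γ ^ (1 - ν) - q)) * d / (c * γ ^ q)) 0 *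
          Real.exp (c * γ ^ (1 - ν) / (1 - ν)) *
          Real.exp (-(c * ((k : ℝ) + 1 + γ) ^ (1 - ν)) / (1 - ν)) := by
  obtain ⟨hν0, hν1⟩ := hν
  have hp0 : (0:ℝ) < 1 - ν := by linarith
  have hγ0 : 0 < γ := lt_of_lt_of_le (Real.rpow_pos_of_pos hc _) hγ1
  have hqc : q / c < γ ^ (1 - ν) := by
    have h1 : ((q / c) ^ (1 / (1 - ν)) : ℝ) ^ (1 - ν) < γ ^ (1 - ν) :=
      Real.rpow_lt_rpow (Real.rpow_nonneg (le_of_lt (div_pos hq hc)) _) hγ2 hp0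
    rwa [← Real.rpow_mul (le_of_lt (div_pos hq hc)), one_div_mul_cancel hp0.ne',
      Real.rpow_one] at h1
  have hG0 : 0 < γ ^ (1 - ν) := Real.rpow_pos_of_pos hγ0 _
  obtain ⟨G, hGdef⟩ : ∃ G : ℝ, G = γ ^ (1 - ν) := ⟨_, rfl⟩
  rw [← hGdef] at hqc hG0 ⊢
  have hD0 : 0 < c * G - q := by
    have := (div_lt_iff₀ hc).mp hqc
    nlinarith
  obtain ⟨D, hDdef⟩ : ∃ D : ℝ, D = c * G - q := ⟨_, rfl⟩
  rw [← hDdef] at hD0 ⊢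
  obtain ⟨lam, hlamdef⟩ : ∃ lam : ℝ, lam = c * G / D := ⟨_, rfl⟩
  rw [← hlamdef]
  have hlam_pos : 0 < lam := hlamdef ▸ div_pos (mul_pos hc hG0) hD0
  obtain ⟨M, hMdef⟩ : ∃ M : ℝ, M = max (a 0 - lam * d / (c * γ ^ q)) 0 := ⟨_, rfl⟩
  rw [← hMdef]
  have hM0 : 0 ≤ M := hMdef ▸ le_max_right _ _
  obtain ⟨E, hEdef⟩ : ∃ E : ℝ, E = Real.exp (c * G / (1 - ν)) := ⟨_, rfl⟩
  rw [← hEdef]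
  have key : ∀ k, k ≤ K + 1 → a k ≤ lam * d / c * ((k:ℝ) + γ) ^ (-q : ℝ) +
      M * E * Real.exp (-(c * ((k:ℝ) + γ) ^ (1 - ν)) / (1 - ν)) := by
    intro k
    induction k with
    | zero =>
      intro _
      simp only [Nat.cast_zero, zero_add]
      rw [← hGdef]
      have hEc : E * Real.exp (-(c * G) / (1 - ν)) = 1 := by
        rw [hEdef, ← Real.exp_add, ← Real.exp_zero]
        congr 1; ring
      have hEM : M * E * Real.exp (-(c * G) / (1 - ν)) = M := by
        rw [mul_assoc, hEc, mul_one]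
      have hq1 : lam * d / c * γ ^ (-q : ℝ) = lam * d / (c * γ ^ q) := by
        rw [Real.rpow_neg hγ0.le]; ring
      have hMub : a 0 - lam * d / (c * γ ^ q) ≤ M := hMdef ▸ le_max_left _ _
      rw [hEM, hq1]
      linarith
    | succ k ih =>
      intro hk
      have hkK : k ≤ K := by omega
      have ihk := ih (by omega)
      obtain ⟨x, hxdef⟩ : ∃ x : ℝ, x = (k:ℝ) + γ := ⟨_, rfl⟩
      rw [← hxdef] at ihk
      have hγx : γ ≤ x := by
        have : (0:ℝ) ≤ (k:ℝ) := Nat.cast_nonneg k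
        rw [hxdef]; linarith
      have hx0 : 0 < x := lt_of_lt_of_le hγ0 hγx
      have hA0 : 0 < x ^ ν := Real.rpow_pos_of_pos hx0 _
      have hB0 : 0 < x ^ q := Real.rpow_pos_of_pos hx0 _
      have hcA : c ≤ x ^ ν := by
        have h1 : (c ^ (1/ν) : ℝ) ^ ν ≤ x ^ ν :=
          Real.rpow_le_rpow (Real.rpow_nonneg hc.le _) (le_trans hγ1 hγx) hν0.le
        rwa [← Real.rpow_mul hc.le, one_div_mul_cancel hν0.ne', Real.rpow_one] at h1
      have hmono : 0 ≤ 1 - c / x ^ ν := by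
        rw [sub_nonneg, div_le_one hA0]; exact hcA
      have hsplit : x ^ (ν + q) = x ^ ν * x ^ q := Real.rpow_add hx0 _ _
      have hxq : x ^ (-q : ℝ) = 1 / x ^ q := by
        rw [Real.rpow_neg hx0.le, one_div]
      have hxsplit : x ^ (1 - ν) * x ^ ν = x := by
        rw [← Real.rpow_add hx0]; norm_num
      have hGA : G * x ^ ν ≤ x := by
        have h1 : γ ^ (1 - ν) ≤ x ^ (1 - ν) := Real.rpow_le_rpow hγ0.le hγx hp0.le
        rw [hGdef]
        calc γ ^ (1 - ν) * x ^ ν ≤ x ^ (1 - ν) * x ^ ν :=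
              mul_le_mul_of_nonneg_right h1 hA0.le
          _ = x := hxsplit
      -- key scalar inequality
      have hkey : lam * q * x ^ ν ≤ (lam - 1) * (c * x) := by
        have h1 : (0:ℝ) ≤ (c * q / D) * (x - G * x ^ ν) :=
          mul_nonneg (by positivity) (by linarith)
        have e2 : (lam - 1) * (c * x) - lam * q * x ^ ν = (c * q / D) * (x - G * x ^ ν) := by
          rw [hlamdef, hDdef]
          have hDne : c * G - q ≠ 0 := by rw [← hDdef]; exact hD0.ne'
          field_simp
          ring
        linarith
      -- Bernoulli for the power term
      have hbern : (1 - q / x) * (1 / x ^ q) ≤ (x + 1) ^ (-q : ℝ) := by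
        have h1 : x + 1 = x * (1 + 1/x) := by field_simp
        have h2 : (x + 1) ^ (-q : ℝ) = x ^ (-q : ℝ) * (1 + 1/x) ^ (-q : ℝ) := by
          rw [h1, Real.mul_rpow hx0.le (by positivity)]
        have h3 : 1 - q * (1/x) ≤ (1 + 1/x) ^ (-q : ℝ) :=
          bern_neg_aux (by positivity : (0:ℝ) ≤ 1/x) hq.le
        rw [h2, hxq]
        have h4 : (0:ℝ) ≤ 1 / x ^ q := by positivity
        calc (1 - q / x) * (1 / x ^ q) = (1/x^q) * (1 - q * (1/x)) := by ring
          _ ≤ (1/x^q) * ((1 + 1/x) ^ (-q : ℝ)) := mul_le_mul_of_nonneg_left h3 h4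
          _ = 1 / x ^ q * (1 + 1/x) ^ (-q : ℝ) := rfl
      -- (A): power part
      have hA : (1 - c / x ^ ν) * (lam * d / c * x ^ (-q : ℝ)) + d / x ^ (ν + q) ≤
          lam * d / c * (x + 1) ^ (-q : ℝ) := by
        have step1 : (1 - c / x ^ ν) * (lam * d / c * x ^ (-q : ℝ)) + d / x ^ (ν + q) ≤
            lam * d / c * ((1 - q / x) * (1 / x ^ q)) := by
          have e : lam * d / c * ((1 - q / x) * (1 / x ^ q)) -
              ((1 - c / x ^ ν) * (lam * d / c * x ^ (-q : ℝ)) + d / x ^ (ν + q)) =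
              (d / (c * x ^ ν * x ^ q * x)) * ((lam - 1) * (c * x) - lam * q * x ^ ν) := by
            rw [hxq, hsplit]
            field_simp
            ring
          have hpos2 : (0:ℝ) ≤ (d / (c * x ^ ν * x ^ q * x)) *
              ((lam - 1) * (c * x) - lam * q * x ^ ν) :=
            mul_nonneg (by positivity) (by linarith)
          linarith
        calc _ ≤ lam * d / c * ((1 - q / x) * (1 / x ^ q)) := step1
          _ ≤ lam * d / c * (x + 1) ^ (-q : ℝ) :=
              mul_le_mul_of_nonneg_left hbern (by positivity)
      -- (B): exponential part
      have hBexp : (1 - c / x ^ ν) *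
          (M * E * Real.exp (-(c * x ^ (1 - ν)) / (1 - ν))) ≤
          M * E * Real.exp (-(c * (x + 1) ^ (1 - ν)) / (1 - ν)) := by
        have hT0 : 0 < Real.exp (-(c * x ^ (1 - ν)) / (1 - ν)) := Real.exp_pos _
        have hbern2 : (x + 1) ^ (1 - ν) ≤ x ^ (1 - ν) + (1 - ν) * (1 / x ^ ν) := by
          have h1 : x + 1 = x * (1 + 1/x) := by field_simp
          have h2 : (x + 1) ^ (1 - ν) = x ^ (1 - ν) * (1 + 1/x) ^ (1 - ν) := by
            rw [h1, Real.mul_rpow hx0.le (by positivity)]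
          have h3 : (1 + 1/x) ^ (1 - ν) ≤ 1 + (1 - ν) * (1/x) :=
            rpow_one_add_le_one_add_mul_self
              (le_trans (by norm_num : (-1:ℝ) ≤ 0) (by positivity)) hp0.le (by linarith)
          have h4 : x ^ (1 - ν) * (1/x) = 1 / x ^ ν := by
            rw [mul_one_div, div_eq_div_iff hx0.ne' hA0.ne', one_mul]
            exact hxsplit
          calc (x + 1) ^ (1 - ν) ≤ x ^ (1 - ν) * (1 + (1 - ν) * (1/x)) := by
                rw [h2]
                exact mul_le_mul_of_nonneg_left h3 (Real.rpow_nonneg hx0.le _)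
            _ = x ^ (1 - ν) + (1 - ν) * (x ^ (1 - ν) * (1/x)) := by ring
            _ = x ^ (1 - ν) + (1 - ν) * (1 / x ^ ν) := by rw [h4]
        have hTstep : (1 - c / x ^ ν) * Real.exp (-(c * x ^ (1 - ν)) / (1 - ν)) ≤
            Real.exp (-(c * (x + 1) ^ (1 - ν)) / (1 - ν)) := by
          have h7 := mul_le_mul_of_nonneg_left hbern2 (le_of_lt (div_pos hc hp0))
          have e : c / (1 - ν) * ((1 - ν) * (1 / x ^ ν)) = c / x ^ ν := by
            field_simp
          have h5 : Real.exp (-(c * x ^ (1 - ν)) / (1 - ν) + (-(c / x ^ ν))) ≤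
              Real.exp (-(c * (x + 1) ^ (1 - ν)) / (1 - ν)) := by
            apply Real.exp_le_exp.mpr
            have e2 : -(c * x ^ (1 - ν)) / (1 - ν) = -(c / (1 - ν) * x ^ (1 - ν)) := by
              field_simp
            have e3 : -(c * (x + 1) ^ (1 - ν)) / (1 - ν) =
                -(c / (1 - ν) * (x + 1) ^ (1 - ν)) := by field_simp
            rw [e2, e3]
            rw [mul_add] at h7
            rw [e] at h7
            linarith
          have h6 : 1 - c / x ^ ν ≤ Real.exp (-(c / x ^ ν)) := by
            have := Real.add_one_le_exp (-(c / x ^ ν)); linarith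
          calc (1 - c / x ^ ν) * Real.exp (-(c * x ^ (1 - ν)) / (1 - ν)) ≤
              Real.exp (-(c / x ^ ν)) * Real.exp (-(c * x ^ (1 - ν)) / (1 - ν)) :=
                mul_le_mul_of_nonneg_right h6 hT0.le
            _ = Real.exp (-(c * x ^ (1 - ν)) / (1 - ν) + (-(c / x ^ ν))) := by
                rw [← Real.exp_add]; ring_nf
            _ ≤ _ := h5
        have hME : 0 ≤ M * E := mul_nonneg hM0 (hEdef ▸ (Real.exp_pos _).le)
        calc (1 - c / x ^ ν) * (M * E * Real.exp (-(c * x ^ (1 - ν)) / (1 - ν)))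
            = M * E * ((1 - c / x ^ ν) * Real.exp (-(c * x ^ (1 - ν)) / (1 - ν))) := by ring
          _ ≤ M * E * Real.exp (-(c * (x + 1) ^ (1 - ν)) / (1 - ν)) :=
              mul_le_mul_of_nonneg_left hTstep hME
      -- combine
      have hrk := hrec k hkK
      rw [← hxdef] at hrk
      have hstep2 : (1 - c / x ^ ν) * a k ≤ (1 - c / x ^ ν) *
          (lam * d / c * x ^ (-q : ℝ) + M * E * Real.exp (-(c * x ^ (1 - ν)) / (1 - ν))) := by
        apply mul_le_mul_of_nonneg_left _ hmono
        exact ihk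
      have hcast : ((k+1 : ℕ) : ℝ) + γ = x + 1 := by rw [hxdef]; push_cast; ring
      rw [hcast]
      calc a (k+1) ≤ (1 - c / x ^ ν) * a k + d / x ^ (ν + q) := hrk
        _ ≤ (1 - c / x ^ ν) * (lam * d / c * x ^ (-q : ℝ) +
            M * E * Real.exp (-(c * x ^ (1 - ν)) / (1 - ν))) + d / x ^ (ν + q) := by
            linarith
        _ = ((1 - c / x ^ ν) * (lam * d / c * x ^ (-q : ℝ)) + d / x ^ (ν + q)) +
            (1 - c / x ^ ν) * (M * E * Real.exp (-(c * x ^ (1 - ν)) / (1 - ν))) := by ring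
        _ ≤ _ := add_le_add hA hBexp
  intro k hk
  have h := key (k+1) (by omega)
  have hcast : ((k+1 : ℕ) : ℝ) + γ = (k:ℝ) + 1 + γ := by push_cast; ring
  rw [hcast] at h
  exact h
end

section
/- Let $\{a_k\}$ be a sequence of positive reals satisfying $a_{k+1} \le (1 - 1/s(b_k)) a_k + 1/t(b_k)$ for all $k \in \{0,\dots,K-1\}$, where $\{b_k\} \subseteq \mathbb{R}_+$, $s, t : \mathbb{R} \to \mathbb{R}_{++}$, and $s(b_k) \ge 1$ for all $k \le K$. Define $r = s/t$. Suppose there exist $k_0 \le \overline{K} \le K-1$ and constants $B, C \in \mathbb{R}$ such that $r(b_k) \le B$ for all $k \ge \overline{K}+1$ and $a_{\overline{K}+1} \le B + C \prod_{i=k_0}^{\overline{K}} (1 - 1/s(b_i))$. Then $a_K \le B + C \prod_{i=k_0}^{K-1} (1 - 1/s(b_i))$. -/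
open Finset

/-- Extension Lemma. -/
theorem extension_lemma
    (K k₀ Kbar : ℕ) (a : ℕ → ℝ) (b : ℕ → ℝ) (s t : ℝ → ℝ) (B C : ℝ)
    (hb : ∀ k, 0 ≤ b k)
    (hspos : ∀ x, 0 < s x) (htpos : ∀ x, 0 < t x)
    (hapos : ∀ k, 0 < a k)
    (hrec : ∀ k, k + 1 ≤ K → a (k + 1) ≤ (1 - 1 / s (b k)) * a k + 1 / t (b k))
    (hs1 : ∀ k ≤ K, 1 ≤ s (b k))
    (hk₀ : k₀ ≤ Kbar) (hKbar : Kbar + 1 ≤ K)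
    (hB : ∀ k, Kbar + 1 ≤ k → s (b k) / t (b k) ≤ B)
    (hstart : a (Kbar + 1) ≤ B + C * ∏ i ∈ Icc k₀ Kbar, (1 - 1 / s (b i))) :
    a K ≤ B + C * ∏ i ∈ Icc k₀ (K - 1), (1 - 1 / s (b i)) := by
  have key : ∀ m, Kbar + 1 ≤ m → m ≤ K →
      a m ≤ B + C * ∏ i ∈ Icc k₀ (m - 1), (1 - 1 / s (b i)) := by
    intro m hm
    induction m, hm using Nat.le_induction with
    | base => intro _; simpa using hstart
    | succ m hm ih =>
      intro hmK
      have hmK' : m ≤ K := by omega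
      have ihm := ih hmK'
      have hrec' := hrec m (by omega)
      have hs := hs1 m hmK'
      have hsm := hspos (b m)
      have htm := htpos (b m)
      have hfac : 0 ≤ 1 - 1 / s (b m) := by
        rw [sub_nonneg]
        exact div_le_one_of_le₀ hs hsm.le
      have hBb : 1 / t (b m) ≤ B / s (b m) := by
        rw [div_le_div_iff₀ htm hsm, one_mul]
        have := hB m (by omega)
        rw [div_le_iff₀ htm] at this
        linarith
      have hprod : (∏ i ∈ Icc k₀ (m + 1 - 1), (1 - 1 / s (b i)))
          = (∏ i ∈ Icc k₀ (m - 1), (1 - 1 / s (b i))) * (1 - 1 / s (b m)) := by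
        have hm1 : m - 1 + 1 = m := by omega
        have := Finset.prod_Icc_succ_top (f := fun i => (1 - 1 / s (b i)))
          (a := k₀) (b := m - 1) (by omega)
        rw [hm1] at this
        simpa using this
      rw [hprod]
      have hchain : a (m + 1) ≤ (1 - 1 / s (b m)) * (B + C * ∏ i ∈ Icc k₀ (m - 1), (1 - 1 / s (b i))) + B / s (b m) := by
        calc a (m + 1) ≤ (1 - 1 / s (b m)) * a m + 1 / t (b m) := hrec'
          _ ≤ (1 - 1 / s (b m)) * (B + C * ∏ i ∈ Icc k₀ (m - 1), (1 - 1 / s (b i))) + B / s (b m) := by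
              gcongr
      calc a (m + 1) ≤ (1 - 1 / s (b m)) * (B + C * ∏ i ∈ Icc k₀ (m - 1), (1 - 1 / s (b i))) + B / s (b m) := hchain
        _ = B + C * ((∏ i ∈ Icc k₀ (m - 1), (1 - 1 / s (b i))) * (1 - 1 / s (b m))) := by ring
  exact key K hKbar le_rfl
end

section
/- Under the hypotheses of the Generalized Chung's Lemma (differentiable version) with constant $\lambda_k \equiv \lambda > 0$ — i.e., $a_{k+1} \le (1 - 1/s(b_k)) a_k + 1/t(b_k)$, $r = s/t$ convex differentiable, $u = r' t$, and $(b_{k+1}-b_k) u(b_k) \ge -1 + 1/\lambda$ for all $k$ — it holds for all $k \in \{0,\dots,K\}$ that $a_{k+1} \le \lambda r(b_{k+1}) + \max\{a_0/r(b_0) - \lambda, 0\} \cdot r(b_{k+1}) \prod_{i=0}^{k} \Big(1 - \frac{1/\lambda}{s(b_i) - 1 + 1/\lambda}\Big)$. -/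
open Finset

/-- Tangent line bound for a convex function with a derivative. -/
lemma tangent_le_of_convexOn {S : Set ℝ} {f : ℝ → ℝ} {x y d : ℝ}
    (hfc : ConvexOn ℝ S f) (hx : x ∈ S) (hy : y ∈ S) (hd : HasDerivAt f d x) :
    f x + d * (y - x) ≤ f y := by
  rcases lt_trichotomy x y with h | h | h
  · have hsl := hfc.le_slope_of_hasDerivAt hx hy h hd
    rw [slope_def_field] at hsl
    have hxy : 0 < y - x := sub_pos.2 h
    have := (le_div_iff₀ hxy).1 hsl
    linarith
  · subst h; simp
  · have hsl := hfc.slope_le_of_hasDerivAt hy hx h hd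
    rw [slope_def_field] at hsl
    have hxy : 0 < x - y := sub_pos.2 h
    have := (div_le_iff₀ hxy).1 hsl
    nlinarith

/-- Forgetting initial conditions (Corollary to the Generalized Chung's Lemma). -/
theorem forgetting_initial_conditions
    (K : ℕ) (a b : ℕ → ℝ) (s t r r' : ℝ → ℝ) (I : Set ℝ) (lam : ℝ)
    (hr : ∀ x ∈ I, r x = s x / t x)
    (hbI : ∀ k ≤ K + 1, b k ∈ I)
    (hs : ∀ x ∈ I, 1 ≤ s x)
    (ht : ∀ x ∈ I, 0 < t x)
    (hconv : ConvexOn ℝ I r)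
    (hderiv : ∀ x ∈ I, HasDerivAt r (r' x) x)
    (hrec : ∀ k ≤ K, a (k + 1) ≤ (1 - 1 / s (b k)) * a k + 1 / t (b k))
    (hlam : 0 < lam)
    (hcond : ∀ k ≤ K, (b (k + 1) - b k) * (r' (b k) * t (b k)) ≥ -1 + 1 / lam) :
    ∀ k ≤ K,
      a (k + 1) ≤ lam * r (b (k + 1)) +
        max (a 0 / r (b 0) - lam) 0 * r (b (k + 1)) *
          ∏ i ∈ range (k + 1), (1 - (1 / lam) / (s (b i) - 1 + 1 / lam)) := by
  set M : ℝ := max (a 0 / r (b 0) - lam) 0 with hMdef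
  have hM0 : 0 ≤ M := le_max_right _ _
  have hlamne : lam ≠ 0 := ne_of_gt hlam
  -- positivity of r at the points b n
  have hrpos : ∀ n ≤ K + 1, 0 < r (b n) := by
    intro n hn
    have hbn := hbI n hn
    rw [hr _ hbn]
    exact div_pos (lt_of_lt_of_le one_pos (hs _ hbn)) (ht _ hbn)
  -- core tangent estimate
  have hcore : ∀ n ≤ K, (s (b n) - 1 + 1 / lam) / t (b n) ≤ r (b (n + 1)) := by
    intro n hn
    have hb0 := hbI n (by omega)
    have hb1 := hbI (n + 1) (by omega)
    have htan := tangent_le_of_convexOn hconv hb0 hb1 (hderiv _ hb0)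
    have hc := hcond n hn
    have htpos := ht _ hb0
    rw [hr _ hb0] at htan
    have h1 : (-1 + 1 / lam) / t (b n) ≤ r' (b n) * (b (n + 1) - b n) := by
      rw [div_le_iff₀ htpos]
      nlinarith
    have h2 : (s (b n) - 1 + 1 / lam) / t (b n)
        = s (b n) / t (b n) + (-1 + 1 / lam) / t (b n) := by ring
    linarith
  -- factors of the product are in [0,1]
  have hf01 : ∀ n ≤ K + 1, 0 ≤ 1 - (1 / lam) / (s (b n) - 1 + 1 / lam) := by
    intro n hn
    have hs1 := hs _ (hbI n hn)
    have hl : 0 < 1 / lam := by positivity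
    have hden : 0 < s (b n) - 1 + 1 / lam := by linarith
    have : (1 / lam) / (s (b n) - 1 + 1 / lam) ≤ 1 := by
      rw [div_le_one hden]; linarith
    linarith
  have hprodnn : ∀ k : ℕ, k ≤ K →
      0 ≤ ∏ i ∈ range (k + 1), (1 - (1 / lam) / (s (b i) - 1 + 1 / lam)) := by
    intro k hk
    refine Finset.prod_nonneg fun i hi => hf01 i ?_
    simp only [mem_range] at hi; omega
  -- step inequality (C)
  have hC : ∀ n ≤ K, r (b n) * (1 - 1 / s (b n)) ≤
      r (b (n + 1)) * (1 - (1 / lam) / (s (b n) - 1 + 1 / lam)) := by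
    intro n hn
    have hb0 := hbI n (by omega)
    have hs1 := hs _ hb0
    have hspos : (0:ℝ) < s (b n) := lt_of_lt_of_le one_pos hs1
    have htpos := ht _ hb0
    have hl : 0 < 1 / lam := by positivity
    have hden : 0 < s (b n) - 1 + 1 / lam := by linarith
    have e1 : r (b n) * (1 - 1 / s (b n)) = (s (b n) - 1) / t (b n) := by
      rw [hr _ hb0]; field_simp
    have e2 : 1 - (1 / lam) / (s (b n) - 1 + 1 / lam)
        = (s (b n) - 1) / (s (b n) - 1 + 1 / lam) := by
      rw [eq_div_iff hden.ne', sub_mul, div_mul_cancel₀ _ hden.ne']; ring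
    rw [e1, e2]
    have h3 : ((s (b n) - 1 + 1 / lam) / t (b n)) * ((s (b n) - 1) / (s (b n) - 1 + 1 / lam))
        ≤ r (b (n + 1)) * ((s (b n) - 1) / (s (b n) - 1 + 1 / lam)) := by
      exact mul_le_mul_of_nonneg_right (hcore n hn) (div_nonneg (by linarith) hden.le)
    have e3 : ((s (b n) - 1 + 1 / lam) / t (b n)) * ((s (b n) - 1) / (s (b n) - 1 + 1 / lam))
        = (s (b n) - 1) / t (b n) := by
      have hd2 : (0:ℝ) < (s (b n) - 1) * lam + 1 := by nlinarith
      have hpos : (0:ℝ) < lam * t (b n) * ((s (b n) - 1) * lam + 1) :=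
        mul_pos (mul_pos hlam htpos) hd2
      field_simp
    linarith [e3 ▸ h3]
  -- step inequality (B)
  have hB : ∀ n ≤ K, (1 - 1 / s (b n)) * (lam * r (b n)) + 1 / t (b n)
      ≤ lam * r (b (n + 1)) := by
    intro n hn
    have hb0 := hbI n (by omega)
    have hs1 := hs _ hb0
    have hspos : (0:ℝ) < s (b n) := lt_of_lt_of_le one_pos hs1
    have htpos := ht _ hb0
    have e1 : (1 - 1 / s (b n)) * (lam * r (b n)) + 1 / t (b n)
        = lam * ((s (b n) - 1 + 1 / lam) / t (b n)) := by
      rw [hr _ hb0]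
      field_simp [hspos.ne', htpos.ne']
    rw [e1]
    exact mul_le_mul_of_nonneg_left (hcore n hn) hlam.le
  -- main induction
  have main : ∀ k, k ≤ K → a (k + 1) - lam * r (b (k + 1)) ≤
      M * r (b (k + 1)) * ∏ i ∈ range (k + 1), (1 - (1 / lam) / (s (b i) - 1 + 1 / lam)) := by
    intro k
    induction k with
    | zero =>
      intro hk
      have hb0 := hbI 0 (by omega)
      have hs1 := hs _ hb0
      have hspos : (0:ℝ) < s (b 0) := lt_of_lt_of_le one_pos hs1
      have hsfac : 0 ≤ 1 - 1 / s (b 0) := by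
        have : 1 / s (b 0) ≤ 1 := by rw [div_le_one hspos]; exact hs1
        linarith
      have hr0 := hrpos 0 (by omega)
      have hd0 : a 0 - lam * r (b 0) ≤ M * r (b 0) := by
        have h1 : a 0 / r (b 0) - lam ≤ M := le_max_left _ _
        have := mul_le_mul_of_nonneg_right h1 hr0.le
        calc a 0 - lam * r (b 0) = (a 0 / r (b 0) - lam) * r (b 0) := by
              field_simp
          _ ≤ M * r (b 0) := this
      have hrec0 := hrec 0 hk
      have hB0 := hB 0 hk
      have step1 : a 1 - lam * r (b 1) ≤ (1 - 1 / s (b 0)) * (a 0 - lam * r (b 0)) := by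
        nlinarith
      have step2 : (1 - 1 / s (b 0)) * (a 0 - lam * r (b 0))
          ≤ (1 - 1 / s (b 0)) * (M * r (b 0)) :=
        mul_le_mul_of_nonneg_left hd0 hsfac
      have step3 : (1 - 1 / s (b 0)) * (M * r (b 0))
          ≤ M * (r (b 1) * (1 - (1 / lam) / (s (b 0) - 1 + 1 / lam))) := by
        have := mul_le_mul_of_nonneg_left (hC 0 hk) hM0
        nlinarith
      rw [Finset.prod_range_one]
      nlinarith
    | succ n ih =>
      intro hk
      have hn1 : n ≤ K := by omega
      have ihn := ih hn1
      have hb0 := hbI (n + 1) (by omega)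
      have hs1 := hs _ hb0
      have hspos : (0:ℝ) < s (b (n + 1)) := lt_of_lt_of_le one_pos hs1
      have hsfac : 0 ≤ 1 - 1 / s (b (n + 1)) := by
        have : 1 / s (b (n + 1)) ≤ 1 := by rw [div_le_one hspos]; exact hs1
        linarith
      have hrecn := hrec (n + 1) hk
      have hBn := hB (n + 1) hk
      have step1 : a (n + 2) - lam * r (b (n + 2))
          ≤ (1 - 1 / s (b (n + 1))) * (a (n + 1) - lam * r (b (n + 1))) := by
        nlinarith
      have step2 : (1 - 1 / s (b (n + 1))) * (a (n + 1) - lam * r (b (n + 1)))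
          ≤ (1 - 1 / s (b (n + 1))) *
            (M * r (b (n + 1)) * ∏ i ∈ range (n + 1), (1 - (1 / lam) / (s (b i) - 1 + 1 / lam))) :=
        mul_le_mul_of_nonneg_left ihn hsfac
      have hPnn := hprodnn n hn1
      have step3 : (1 - 1 / s (b (n + 1))) *
            (M * r (b (n + 1)) * ∏ i ∈ range (n + 1), (1 - (1 / lam) / (s (b i) - 1 + 1 / lam)))
          ≤ M * (r (b (n + 2)) * (1 - (1 / lam) / (s (b (n + 1)) - 1 + 1 / lam))) *
            ∏ i ∈ range (n + 1), (1 - (1 / lam) / (s (b i) - 1 + 1 / lam)) := by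
        have h := hC (n + 1) hk
        have h2 : (r (b (n + 1)) * (1 - 1 / s (b (n + 1)))) * (M * ∏ i ∈ range (n + 1),
              (1 - (1 / lam) / (s (b i) - 1 + 1 / lam)))
            ≤ (r (b (n + 2)) * (1 - (1 / lam) / (s (b (n + 1)) - 1 + 1 / lam))) *
              (M * ∏ i ∈ range (n + 1), (1 - (1 / lam) / (s (b i) - 1 + 1 / lam))) :=
          mul_le_mul_of_nonneg_right h (by positivity)
        nlinarith [h2]
      have eprod : ∏ i ∈ range (n + 2), (1 - (1 / lam) / (s (b i) - 1 + 1 / lam))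
          = (∏ i ∈ range (n + 1), (1 - (1 / lam) / (s (b i) - 1 + 1 / lam))) *
            (1 - (1 / lam) / (s (b (n + 1)) - 1 + 1 / lam)) := by
        rw [Finset.prod_range_succ]
      rw [eprod]
      calc a (n + 1 + 1) - lam * r (b (n + 1 + 1))
          ≤ (1 - 1 / s (b (n + 1))) * (a (n + 1) - lam * r (b (n + 1))) := step1
        _ ≤ _ := step2
        _ ≤ _ := step3
        _ = M * r (b (n + 2)) * ((∏ i ∈ range (n + 1),
              (1 - (1 / lam) / (s (b i) - 1 + 1 / lam))) *
              (1 - (1 / lam) / (s (b (n + 1)) - 1 + 1 / lam))) := by ring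
  intro k hk
  have := main k hk
  linarith
end

section
/- For all integers $K \ge 1$ and all $k \in \{0, 1, \dots, K\}$: $2(1 - k/K)^2 \le 1 + \cos(k\pi/K) \le \frac{\pi^2}{2}(1 - k/K)^2$. -/
open Real

/-- 2(1 - k/K)² ≤ 1 + cos(kπ/K) ≤ (π²/2)(1 - k/K)². -/
theorem one_add_cos_bounds
    (K k : ℕ) (hK : 1 ≤ K) (hk : k ≤ K) :
    2 * (1 - (k : ℝ) / K) ^ 2 ≤ 1 + Real.cos ((k : ℝ) * π / K) ∧
    1 + Real.cos ((k : ℝ) * π / K) ≤ π ^ 2 / 2 * (1 - (k : ℝ) / K) ^ 2 := by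
  have hKpos : (0 : ℝ) < K := by exact_mod_cast hK
  have hkK : (k : ℝ) ≤ K := by exact_mod_cast hk
  have hk0 : (0 : ℝ) ≤ k := Nat.cast_nonneg k
  have hπ := Real.pi_pos
  set x : ℝ := π / 2 - (k : ℝ) * π / (2 * K) with hx
  have hx0 : 0 ≤ x := by
    rw [hx]
    have : (k : ℝ) * π / (2 * K) ≤ π / 2 := by
      rw [div_le_div_iff₀ (by positivity) (by norm_num)]
      nlinarith
    linarith
  have hx2 : x ≤ π / 2 := by
    rw [hx]
    have : 0 ≤ (k : ℝ) * π / (2 * K) := by positivity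
    linarith
  have hcos : 1 + Real.cos ((k : ℝ) * π / K) = 2 * Real.sin x ^ 2 := by
    have h2 : (k : ℝ) * π / K = 2 * ((k : ℝ) * π / (2 * K)) := by field_simp
    have hsx : Real.sin x = Real.cos ((k : ℝ) * π / (2 * K)) := by
      rw [hx, Real.sin_pi_div_two_sub]
    have hs := Real.sin_sq_add_cos_sq ((k : ℝ) * π / (2 * K))
    rw [h2, Real.cos_two_mul', hsx]
    linarith
  have hfrac : 1 - (k : ℝ) / K = 2 / π * x := by
    rw [hx]; field_simp
  have hsin_le : Real.sin x ≤ x := Real.sin_le hx0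
  have hle_sin : 2 / π * x ≤ Real.sin x := Real.mul_le_sin hx0 hx2
  have hsin0 : 0 ≤ Real.sin x := le_trans (by positivity) hle_sin
  constructor
  · rw [hcos, hfrac]
    have ha0 : (0:ℝ) ≤ 2 / π * x := by positivity
    have := pow_le_pow_left₀ ha0 hle_sin 2
    linarith
  · rw [hcos, hfrac]
    have h1 : Real.sin x ^ 2 ≤ x ^ 2 := by nlinarith
    have h2 : π ^ 2 / 2 * (2 / π * x) ^ 2 = 2 * x ^ 2 := by field_simp
    rw [h2]; linarith
end

section
/- For all integers $K \ge 2$ and all $k \in \{0, 1, \dots, K-2\}$: $1 + \cos\big(\frac{(k+1)\pi}{K}\big) \ge \frac{1}{2}\big(1 - \frac{k}{K}\big)^2$. -/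
open Real

/-- 1 + cos((k+1)π/K) ≥ (1/2)(1 - k/K)² for k ≤ K-2. -/
theorem one_add_cos_succ_ge
    (K k : ℕ) (hK : 2 ≤ K) (hk : k ≤ K - 2) :
    1 + Real.cos (((k : ℝ) + 1) * π / K) ≥ (1 / 2) * (1 - (k : ℝ) / K) ^ 2 := by
  have hkK : (k : ℝ) + 2 ≤ K := by
    have : k + 2 ≤ K := by omega
    exact_mod_cast this
  have hKpos : (0 : ℝ) < K := by positivity
  have hpi := Real.pi_pos
  set x : ℝ := ((k : ℝ) + 1) * π / K / 2 with hx
  have hx0 : 0 ≤ x := by positivity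
  have hx2 : x ≤ π / 2 := by
    rw [hx, div_le_div_iff₀ (by positivity) (by norm_num)]
    rw [div_mul_eq_mul_div, div_le_iff₀ hKpos]
    nlinarith
  have hcos : 1 - 2 / π * x ≤ Real.cos x := Real.one_sub_mul_le_cos hx0 hx2
  have hval : 1 - 2 / π * x = 1 - ((k : ℝ) + 1) / K := by
    rw [hx]; field_simp
  have hnn : 0 ≤ 1 - ((k : ℝ) + 1) / K := by
    rw [sub_nonneg, div_le_one hKpos]; linarith
  have hsq : Real.cos x ^ 2 = 1 / 2 + Real.cos (2 * x) / 2 := Real.cos_sq x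
  have h2x : 2 * x = ((k : ℝ) + 1) * π / K := by rw [hx]; ring
  rw [h2x] at hsq
  have hcsq : (1 - ((k : ℝ) + 1) / K) ^ 2 ≤ Real.cos x ^ 2 := by
    rw [← hval]
    exact pow_le_pow_left₀ (hval ▸ hnn) hcos 2
  have hfinal : (1 / 2) * (1 - (k : ℝ) / K) ^ 2 ≤ 2 * (1 - ((k : ℝ) + 1) / K) ^ 2 := by
    have h1 : (1 - (k : ℝ) / K) = ((K : ℝ) - k) / K := by field_simp
    have h2 : (1 - ((k : ℝ) + 1) / K) = ((K : ℝ) - k - 1) / K := by field_simp; ring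
    rw [h1, h2, div_pow, div_pow]
    rw [← mul_div_assoc, ← mul_div_assoc,
      div_le_div_iff₀ (by positivity : (0:ℝ) < (K:ℝ)^2) (by positivity : (0:ℝ) < (K:ℝ)^2)]
    nlinarith [sq_nonneg ((K : ℝ) - k - 2), sq_nonneg ((K : ℝ) - k), sq_nonneg ((K:ℝ))]
  nlinarith [hcsq, hfinal, hsq]
end

section
/- Let $f : \mathbb{R}^n \to \mathbb{R}$ be $L$-smooth, bounded below with infimum $f^*$, and satisfy the $(\theta, \mu)$-PL condition for some $\theta \in (1/2, 1]$, $\mu > 0$: $\|\nabla f(x)\| \ge \sqrt{2\mu}(f(x) - f^*)^{\theta}$ for all $x$. Let $\{x^k\}$ be generated by gradient descent with step sizes $0 < \alpha_k \le 1/L$. Then for all $K \ge 1$: $f(x^K) - f^* \le \big[(f(x^0) - f^*)^{1-2\theta} + (2\theta - 1)\mu \sum_{k=0}^{K-1} \alpha_k\big]^{-1/(2\theta - 1)}$, provided $f(x^0) > f^*$. -/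
open Finset intervalIntegral

/-- Descent lemma: quadratic upper bound for L-Lipschitz-gradient functions. -/
lemma gd_descent_aux {n : ℕ} (f : EuclideanSpace ℝ (Fin n) → ℝ) (L : ℝ) (hL : 0 < L)
    (hdiff : Differentiable ℝ f)
    (hlip : ∀ x y, ‖gradient f x - gradient f y‖ ≤ L * ‖x - y‖)
    (x v : EuclideanSpace ℝ (Fin n)) :
    f (x + v) ≤ f x + inner ℝ (gradient f x) v + L / 2 * ‖v‖ ^ 2 := by
  have hL0 : 0 ≤ L := hL.le
  -- derivative of g t = f (x + t • v)
  have hder : ∀ t : ℝ, HasDerivAt (fun t : ℝ => f (x + t • v))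
      (inner ℝ (gradient f (x + t • v)) v : ℝ) t := by
    intro t
    have h2 : HasDerivAt (fun t : ℝ => x + t • v) v t := by
      simpa using ((hasDerivAt_id t).smul_const v).const_add x
    have h1 : HasFDerivAt f ((InnerProductSpace.toDual ℝ _) (gradient f (x + t • v)))
        (x + t • v) := (hdiff (x + t • v)).hasGradientAt.hasFDerivAt
    have := h1.comp_hasDerivAt t h2
    simpa [InnerProductSpace.toDual_apply_apply, Function.comp_def] using this
  have hgradcont : Continuous (gradient f) := by
    have : LipschitzWith (Real.toNNReal L) (gradient f) := by
      apply LipschitzWith.of_dist_le_mul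
      intro a b
      simpa [dist_eq_norm, Real.coe_toNNReal L hL0] using hlip a b
    exact this.continuous
  have hcont : Continuous fun t : ℝ => (inner ℝ (gradient f (x + t • v)) v : ℝ) := by
    exact (Continuous.inner (hgradcont.comp (by continuity)) continuous_const)
  have hint : ∀ a b : ℝ, IntervalIntegrable
      (fun t : ℝ => (inner ℝ (gradient f (x + t • v)) v : ℝ)) MeasureTheory.volume a b :=
    fun a b => hcont.intervalIntegrable a b
  have heq : ∫ t in (0:ℝ)..1, (inner ℝ (gradient f (x + t • v)) v : ℝ)
      = f (x + v) - f x := by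
    have := intervalIntegral.integral_eq_sub_of_hasDerivAt
      (f := fun t : ℝ => f (x + t • v)) (fun t _ => hder t) (hint 0 1)
    simpa using this
  have hbound : ∫ t in (0:ℝ)..1, (inner ℝ (gradient f (x + t • v)) v : ℝ)
      ≤ ∫ t in (0:ℝ)..1, (inner ℝ (gradient f x) v + L * ‖v‖ ^ 2 * t) := by
    apply intervalIntegral.integral_mono_on (by norm_num) (hint 0 1)
    · exact ((continuous_const.add (continuous_const.mul continuous_id')).intervalIntegrable 0 1)
    · intro t ht
      rcases ht with ⟨ht0, ht1⟩
      have h1 : (inner ℝ (gradient f (x + t • v)) v : ℝ) - inner ℝ (gradient f x) v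
          = inner ℝ (gradient f (x + t • v) - gradient f x) v := by
        rw [inner_sub_left]
      have h2 : (inner ℝ (gradient f (x + t • v) - gradient f x) v : ℝ)
          ≤ ‖gradient f (x + t • v) - gradient f x‖ * ‖v‖ := real_inner_le_norm _ _
      have h3 : ‖gradient f (x + t • v) - gradient f x‖ ≤ L * (t * ‖v‖) := by
        have := hlip (x + t • v) x
        simpa [norm_smul, abs_of_nonneg ht0] using this
      nlinarith [norm_nonneg v, mul_le_mul_of_nonneg_right h3 (norm_nonneg v)]
  have hval : ∫ t in (0:ℝ)..1, ((inner ℝ (gradient f x) v : ℝ) + L * ‖v‖ ^ 2 * t)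
      = inner ℝ (gradient f x) v + L / 2 * ‖v‖ ^ 2 := by
    rw [intervalIntegral.integral_add (g := fun t : ℝ => L * ‖v‖ ^ 2 * t) (intervalIntegrable_const)
      (((continuous_const.mul continuous_id' : Continuous fun t : ℝ => L * ‖v‖ ^ 2 * t).intervalIntegrable 0 1))]
    rw [intervalIntegral.integral_const_mul, integral_id]
    simp
    ring
  rw [heq] at hbound
  rw [hval] at hbound
  linarith


/-- Tangent-line inequality for negative powers. -/
lemma gd_key_aux (c a b m : ℝ) (hc : 0 < c) (hc1 : c ≤ 1) (ha : 0 < a) (hb : 0 < b)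
    (hm : 0 ≤ m) (h : b ≤ a - m * a ^ (c + 1)) :
    a ^ (-c) + c * m ≤ b ^ (-c) := by
  have hac1 : (0:ℝ) < a ^ (c + 1) := Real.rpow_pos_of_pos ha _
  have hba : b ≤ a := by nlinarith
  set t : ℝ := b / a with htdef
  have ht0 : 0 < t := div_pos hb ha
  have ht1 : t ≤ 1 := (div_le_one ha).2 hba
  have htc : t ^ c ≤ 1 + c * (t - 1) := by
    have := rpow_one_add_le_one_add_mul_self (s := t - 1) (by linarith) hc.le hc1
    simpa using this
  have htcpos : (0:ℝ) < t ^ c := Real.rpow_pos_of_pos ht0 c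
  -- t ^ (-c) ≥ 1 + c * (1 - t)
  have hinv : 1 + c * (1 - t) ≤ t ^ (-c) := by
    rw [Real.rpow_neg ht0.le, ← one_div, le_div_iff₀ htcpos]
    nlinarith [mul_le_mul_of_nonneg_left htc (show (0:ℝ) ≤ 1 + c * (1 - t) by nlinarith), sq_nonneg (c * (1 - t))]
  -- b^(-c) = a^(-c) * t^(-c)
  have hsplit : b ^ (-c) = a ^ (-c) * t ^ (-c) := by
    rw [htdef, Real.div_rpow hb.le ha.le]
    field_simp
  -- 1 - t ≥ m * a ^ c
  have hac : a ^ (c + 1) = a ^ c * a := by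
    rw [Real.rpow_add ha, Real.rpow_one]
  have hacpos : (0:ℝ) < a ^ c := Real.rpow_pos_of_pos ha c
  have hone : m * a ^ c ≤ 1 - t := by
    have : b / a ≤ 1 - m * a ^ c := by
      rw [div_le_iff₀ ha]
      nlinarith
    linarith [this]
  have hanegpos : (0:ℝ) < a ^ (-c) := Real.rpow_pos_of_pos ha _
  have hainv : a ^ (-c) * a ^ c = 1 := by
    rw [Real.rpow_neg ha.le]
    field_simp
  have H1 := mul_le_mul_of_nonneg_left hinv hanegpos.le
  have H2 := mul_le_mul_of_nonneg_left hone (mul_nonneg hc.le hanegpos.le)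
  have hmm : c * m * (a ^ (-c) * a ^ c) = c * m := by rw [hainv]; ring
  rw [hsplit]
  nlinarith [H1, H2, hmm]




/-- Noise-free gradient descent rate under the (θ,μ)-PL condition, θ ∈ (1/2,1]. -/
theorem gd_rate_PL_theta
    (n : ℕ) (f : EuclideanSpace ℝ (Fin n) → ℝ) (L μ θ fstar : ℝ)
    (hL : 0 < L) (hμ : 0 < μ) (hθ : θ ∈ Set.Ioc (1 / 2 : ℝ) 1)
    (hdiff : Differentiable ℝ f)
    (hlip : ∀ x y, ‖gradient f x - gradient f y‖ ≤ L * ‖x - y‖)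
    (hinf : IsGLB (Set.range f) fstar)
    (hPL : ∀ x, ‖gradient f x‖ ≥ Real.sqrt (2 * μ) * (f x - fstar) ^ θ)
    (x : ℕ → EuclideanSpace ℝ (Fin n)) (α : ℕ → ℝ)
    (hα : ∀ k, 0 < α k ∧ α k ≤ 1 / L)
    (hx : ∀ k, x (k + 1) = x k - α k • gradient f (x k))
    (h0 : fstar < f (x 0)) :
    ∀ K : ℕ, 1 ≤ K →
      f (x K) - fstar ≤
        ((f (x 0) - fstar) ^ (1 - 2 * θ) +
          (2 * θ - 1) * μ * ∑ k ∈ range K, α k) ^ (-(1 / (2 * θ - 1))) := by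
  obtain ⟨hθ1, hθ2⟩ := hθ
  set c : ℝ := 2 * θ - 1 with hcdef
  have hc : 0 < c := by simp only [hcdef]; linarith
  have hc1 : c ≤ 1 := by simp only [hcdef]; linarith
  set a : ℕ → ℝ := fun k => f (x k) - fstar with hadef
  have ha0 : ∀ k, 0 ≤ a k := fun k => by
    have := hinf.1 (Set.mem_range_self (x k)); simpa [hadef] using this
  -- one step descent
  have hstep : ∀ k, a (k + 1) ≤ a k - (α k * μ) * a k ^ (c + 1) := by
    intro k
    set g := gradient f (x k) with hgdef
    have hdesc := gd_descent_aux f L hL hdiff hlip (x k) (-(α k • g))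
    have hx' : x (k + 1) = x k + -(α k • g) := by rw [hx k]; abel
    have hinner : (inner ℝ g (-(α k • g)) : ℝ) = -(α k * ‖g‖ ^ 2) := by
      rw [inner_neg_right, real_inner_smul_right, real_inner_self_eq_norm_sq]
    have hnorm : ‖-(α k • g)‖ ^ 2 = α k ^ 2 * ‖g‖ ^ 2 := by
      rw [norm_neg, norm_smul]
      rw [Real.norm_eq_abs, abs_of_nonneg (hα k).1.le]
      ring
    rw [← hx', hinner, hnorm] at hdesc
    -- f (x (k+1)) ≤ f (x k) - (α k / 2) ‖g‖²
    have hαL : L * α k ≤ 1 := by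
      have := (hα k).2
      rw [le_div_iff₀ hL] at this
      linarith
    have hhalf : f (x (k + 1)) ≤ f (x k) - α k / 2 * ‖g‖ ^ 2 := by
      nlinarith [sq_nonneg ‖g‖, (hα k).1, sq_nonneg (α k)]
    -- PL squared
    have hPLsq : ‖g‖ ^ 2 ≥ 2 * μ * a k ^ (c + 1) := by
      have h1 := hPL (x k)
      have h2 : (0:ℝ) ≤ Real.sqrt (2 * μ) * (a k) ^ θ :=
        mul_nonneg (Real.sqrt_nonneg _) (Real.rpow_nonneg (ha0 k) θ)
      have h3 : (Real.sqrt (2 * μ) * a k ^ θ) ^ 2 ≤ ‖g‖ ^ 2 := by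
        apply sq_le_sq' <;> nlinarith [norm_nonneg g]
      have h4 : (Real.sqrt (2 * μ) * a k ^ θ) ^ 2 = 2 * μ * a k ^ (c + 1) := by
        rw [mul_pow, Real.sq_sqrt (by positivity)]
        congr 1
        rw [← Real.rpow_natCast (a k ^ θ) 2, ← Real.rpow_mul (ha0 k)]
        norm_num
        rw [show θ * 2 = c + 1 by rw [hcdef]; ring]
      linarith [h4 ▸ h3]
    have := (hα k).1
    simp only [hadef]
    nlinarith [Real.rpow_nonneg (ha0 k) (c + 1)]
  -- main induction
  set D : ℕ → ℝ := fun K => a 0 ^ (-c) + c * μ * ∑ k ∈ range K, α k with hDdef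
  have ha0pos : 0 < a 0 := by simp only [hadef]; linarith
  have hD : ∀ K, 0 < D K := by
    intro K
    have h1 : 0 < a 0 ^ (-c) := Real.rpow_pos_of_pos ha0pos _
    have h2 : 0 ≤ ∑ k ∈ range K, α k :=
      Finset.sum_nonneg fun k _ => (hα k).1.le
    have : 0 ≤ c * μ * ∑ k ∈ range K, α k := by positivity
    simp only [hDdef]; linarith
  have hexp : (-c) * (-(1 / c)) = 1 := by field_simp
  have claim : ∀ K, a K ≤ D K ^ (-(1 / c)) := by
    intro K
    induction K with
    | zero =>
        have : D 0 = a 0 ^ (-c) := by simp [hDdef]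
        rw [this, ← Real.rpow_mul ha0pos.le, hexp, Real.rpow_one]
    | succ K ih =>
        have hDsucc : D (K + 1) = D K + c * (μ * α K) := by
          simp only [hDdef, Finset.sum_range_succ]; ring
        rcases le_or_gt (a (K + 1)) 0 with hneg | hpos
        · exact hneg.trans (Real.rpow_pos_of_pos (hD (K + 1)) _).le
        · have haK : 0 < a K := by
            by_contra hK
            push_neg at hK
            have haK0 : a K = 0 := le_antisymm hK (ha0 K)
            have h1 := hstep K
            rw [haK0, Real.zero_rpow (by positivity : c + 1 ≠ 0)] at h1
            simp at h1
            linarith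
          -- key inequality
          have hkey : a K ^ (-c) + c * (α K * μ) ≤ a (K + 1) ^ (-c) := by
            apply gd_key_aux c (a K) (a (K + 1)) (α K * μ) hc hc1 haK hpos
              (mul_nonneg (hα K).1.le hμ.le) (hstep K)
          -- a K ^ (-c) ≥ D K
          have hlow : D K ≤ a K ^ (-c) := by
            have h1 : a K ^ (-c) ≥ (D K ^ (-(1 / c))) ^ (-c) :=
              Real.rpow_le_rpow_of_nonpos haK ih (by linarith)
            rwa [← Real.rpow_mul (hD K).le, mul_comm, hexp, Real.rpow_one] at h1
          have hup : D (K + 1) ≤ a (K + 1) ^ (-c) := by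
            rw [hDsucc]
            have : c * (μ * α K) = c * (α K * μ) := by ring
            linarith [this ▸ hkey]
          have h2 : (a (K + 1) ^ (-c)) ^ (-(1 / c)) ≤ D (K + 1) ^ (-(1 / c)) :=
            Real.rpow_le_rpow_of_nonpos (hD (K + 1)) hup (neg_nonpos.mpr (by positivity))
          rwa [← Real.rpow_mul hpos.le, hexp, Real.rpow_one] at h2
  intro K _
  have := claim K
  have hrw : (f (x 0) - fstar) ^ (1 - 2 * θ) = a 0 ^ (-c) := by
    simp only [hadef, hcdef]
    norm_num
  rw [hrw]
  simpa [hDdef, hcdef, hadef] using this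
end

section
/- Let $\{a_k\}$ be a nonnegative real sequence satisfying $a_{k+1} \le a_k - c\, \alpha_k a_k^{2\theta}$ for all $k \ge 0$, where $c > 0$, $\theta \in (1/2, 1]$, $\alpha_k > 0$, and $a_0 > 0$. Then for all $K \ge 1$: $a_K \le \big[a_0^{1-2\theta} + (2\theta - 1) c \sum_{k=0}^{K-1} \alpha_k\big]^{-1/(2\theta-1)}$. -/
open Finset

/-- Gradient inequality for the convex map `t ↦ t ^ p` with `p ≤ 0`. -/
lemma rpow_grad_ineq {x y p : ℝ} (hx : 0 < x) (hy : 0 < y) (hp : p ≤ 0) :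
    x ^ p + p * x ^ (p - 1) * (y - x) ≤ y ^ p := by
  have ht : 0 < y / x := div_pos hy hx
  have h1 : 1 + p * Real.log (y / x) ≤ (y / x) ^ p := by
    rw [Real.rpow_def_of_pos ht]
    have := Real.add_one_le_exp (Real.log (y / x) * p)
    linarith [this]
  have h2 : Real.log (y / x) ≤ y / x - 1 := Real.log_le_sub_one_of_pos ht
  have h3 : p * (y / x - 1) ≤ p * Real.log (y / x) := mul_le_mul_of_nonpos_left h2 hp
  have key : 1 + p * (y / x - 1) ≤ (y / x) ^ p := by linarith
  have hxp : 0 < x ^ p := Real.rpow_pos_of_pos hx p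
  have h4 : (1 + p * (y / x - 1)) * x ^ p ≤ (y / x) ^ p * x ^ p :=
    mul_le_mul_of_nonneg_right key hxp.le
  rw [Real.div_rpow hy.le hx.le, div_mul_cancel₀ _ hxp.ne'] at h4
  have hx1 : x ^ (p - 1) = x ^ p / x := by
    rw [Real.rpow_sub hx, Real.rpow_one]
  calc x ^ p + p * x ^ (p - 1) * (y - x)
      = (1 + p * (y / x - 1)) * x ^ p := by rw [hx1]; field_simp
    _ ≤ y ^ p := h4

/-- Rate for the power-type decrease recursion. -/
theorem power_recursion_rate
    (a : ℕ → ℝ) (α : ℕ → ℝ) (c θ : ℝ)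
    (hc : 0 < c) (hθ : θ ∈ Set.Ioc (1 / 2 : ℝ) 1)
    (hα : ∀ k, 0 < α k)
    (ha : ∀ k, 0 ≤ a k) (ha0 : 0 < a 0)
    (hrec : ∀ k, a (k + 1) ≤ a k - c * α k * a k ^ (2 * θ)) :
    ∀ K : ℕ, 1 ≤ K →
      a K ≤ (a 0 ^ (1 - 2 * θ) +
        (2 * θ - 1) * c * ∑ k ∈ range K, α k) ^ (-(1 / (2 * θ - 1))) := by
  have hq : 0 < 2 * θ - 1 := by have := hθ.1; linarith
  intro K hK
  set S : ℝ := a 0 ^ (1 - 2 * θ) + (2 * θ - 1) * c * ∑ k ∈ range K, α k with hSdef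
  have hsum : 0 ≤ ∑ k ∈ range K, α k := Finset.sum_nonneg fun k _ => (hα k).le
  have hS : 0 < S := by
    have h1 : 0 < a 0 ^ (1 - 2 * θ) := Real.rpow_pos_of_pos ha0 _
    have h2 : 0 ≤ (2 * θ - 1) * c * ∑ k ∈ range K, α k := by positivity
    linarith
  rcases eq_or_lt_of_le (ha K) with h0 | hKpos
  · rw [← h0]
    exact (Real.rpow_pos_of_pos hS _).le
  · -- all earlier terms are positive
    have hzero : ∀ k, a k = 0 → ∀ m, a (k + m) = 0 := by
      intro k hk m
      induction m with
      | zero => simpa using hk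
      | succ n ih =>
        have h1 := hrec (k + n)
        rw [ih, Real.zero_rpow (by linarith : 2 * θ ≠ 0)] at h1
        have h2 : a (k + n + 1) ≤ 0 := by
          have := mul_pos hc (hα (k + n))
          nlinarith
        have : a (k + (n + 1)) = 0 := le_antisymm (by simpa [← add_assoc] using h2) (ha _)
        exact this
    have hall : ∀ k ≤ K, 0 < a k := by
      intro k hk
      rcases eq_or_lt_of_le (ha k) with h | h
      · exfalso
        have := hzero k h.symm (K - k)
        rw [Nat.add_sub_cancel' hk] at this
        linarith
      · exact h
    have key : ∀ n ≤ K,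
        a 0 ^ (1 - 2 * θ) + (2 * θ - 1) * c * ∑ k ∈ range n, α k ≤ a n ^ (1 - 2 * θ) := by
      intro n hn
      induction n with
      | zero => simp
      | succ m ih =>
        have hm : m ≤ K := Nat.le_of_succ_le hn
        have ihm := ih hm
        have ham : 0 < a m := hall m hm
        have hams : 0 < a (m + 1) := hall (m + 1) hn
        have hgrad := rpow_grad_ineq ham hams (by linarith : (1 : ℝ) - 2 * θ ≤ 0)
        -- bound the increment
        have hmul : 0 < a m ^ (1 - 2 * θ - 1) := Real.rpow_pos_of_pos ham _
        have hrecm : a (m + 1) - a m ≤ -(c * α m * a m ^ (2 * θ)) := by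
          have := hrec m; linarith
        have hneg : (1 - 2 * θ) * a m ^ (1 - 2 * θ - 1) ≤ 0 := by nlinarith
        have h5 : (1 - 2 * θ) * a m ^ (1 - 2 * θ - 1) * (-(c * α m * a m ^ (2 * θ)))
            ≤ (1 - 2 * θ) * a m ^ (1 - 2 * θ - 1) * (a (m + 1) - a m) := by
          exact mul_le_mul_of_nonpos_left hrecm hneg
        have hpow : a m ^ (1 - 2 * θ - 1) * a m ^ (2 * θ) = 1 := by
          rw [← Real.rpow_add ham]
          norm_num
        have h6 : (1 - 2 * θ) * a m ^ (1 - 2 * θ - 1) * (-(c * α m * a m ^ (2 * θ)))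
            = (2 * θ - 1) * c * α m := by
          have : (1 - 2 * θ) * a m ^ (1 - 2 * θ - 1) * (-(c * α m * a m ^ (2 * θ)))
              = (2 * θ - 1) * c * α m * (a m ^ (1 - 2 * θ - 1) * a m ^ (2 * θ)) := by ring
          rw [this, hpow, mul_one]
        have hstep : a m ^ (1 - 2 * θ) + (2 * θ - 1) * c * α m ≤ a (m + 1) ^ (1 - 2 * θ) := by
          rw [← h6]
          linarith
        rw [Finset.sum_range_succ]
        linarith
    have hfin : S ≤ a K ^ (1 - 2 * θ) := key K le_rfl
    -- conclude
    have hz : -(1 / (2 * θ - 1)) ≤ 0 := neg_nonpos.mpr (by positivity)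
    have h7 : (a K ^ (1 - 2 * θ)) ^ (-(1 / (2 * θ - 1))) ≤ S ^ (-(1 / (2 * θ - 1))) :=
      Real.rpow_le_rpow_of_nonpos hS hfin hz
    have h8 : (a K ^ (1 - 2 * θ)) ^ (-(1 / (2 * θ - 1))) = a K := by
      have hE : (1 - 2 * θ) * (-(1 / (2 * θ - 1))) = 1 := by field_simp; ring
      rw [← Real.rpow_mul (ha K), hE, Real.rpow_one]
    linarith
end

section
/- Let $\{y_k\}$ be a nonnegative sequence satisfying $y_{k+1} \le \Big(1 - \frac{\alpha\theta\ell_2}{(k+\gamma)\log(k+\gamma)}\Big) y_k + \frac{2\alpha\theta\ell_2}{(k+\gamma)\log(k+\gamma)^{2\theta/(2\theta-1)}}$ for all $k \ge 0$, where $\theta \in (1/2, 1]$, $\ell_2 > 0$, $\alpha \ge \frac{2}{\theta(2\theta-1)\ell_2}$, and $\gamma > 1$ is large enough that $\gamma \log(\gamma) \ge \alpha\theta\ell_2$. Then for all $k \ge 0$: $y_{k+1} \le 4 \log(k+1+\gamma)^{-1/(2\theta-1)} + y_0 \big(\log(k+1+\gamma)/\log(\gamma)\big)^{-\alpha\theta\ell_2}$.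 -/
private lemma aux_key (B B' s t u : ℝ) (hB : 0 < B) (hB' : 0 < B')
    (hu : 0 ≤ u) (hle : B' ≤ B * (1 + u)) (hs : 0 ≤ s)
    (hst : s * u ≤ t) (ht : t ≤ 1) :
    (1 - t) * B ^ (-s) ≤ B' ^ (-s) := by
  have hpu : (0:ℝ) < 1 + u := by linarith
  have h1 : (1 + u) ^ s ≤ Real.exp (s * u) := by
    rw [Real.rpow_def_of_pos hpu]
    apply Real.exp_le_exp.mpr
    have hlog : Real.log (1 + u) ≤ u := by
      have := Real.log_le_sub_one_of_pos hpu
      linarith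
    calc Real.log (1 + u) * s ≤ u * s := mul_le_mul_of_nonneg_right hlog hs
      _ = s * u := by ring
  have hBs : (0:ℝ) < B ^ s := Real.rpow_pos_of_pos hB s
  have hB's : (0:ℝ) < B' ^ s := Real.rpow_pos_of_pos hB' s
  have h2 : B' ^ s ≤ B ^ s * Real.exp t := by
    calc B' ^ s ≤ (B * (1 + u)) ^ s := Real.rpow_le_rpow hB'.le hle hs
      _ = B ^ s * (1 + u) ^ s := Real.mul_rpow hB.le hpu.le
      _ ≤ B ^ s * Real.exp (s * u) := mul_le_mul_of_nonneg_left h1 hBs.le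
      _ ≤ B ^ s * Real.exp t :=
          mul_le_mul_of_nonneg_left (Real.exp_le_exp.mpr hst) hBs.le
  have h3 : (1 - t) * B' ^ s ≤ B ^ s := by
    have hexp1 : (1 - t) * Real.exp t ≤ 1 := by
      have h4 : 1 - t ≤ Real.exp (-t) := by
        have := Real.add_one_le_exp (-t)
        linarith
      have h5 : (0:ℝ) < Real.exp t := Real.exp_pos t
      calc (1 - t) * Real.exp t ≤ Real.exp (-t) * Real.exp t :=
            mul_le_mul_of_nonneg_right h4 h5.le
        _ = 1 := by rw [← Real.exp_add]; simp
    calc (1 - t) * B' ^ s ≤ (1 - t) * (B ^ s * Real.exp t) :=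
          mul_le_mul_of_nonneg_left h2 (by linarith)
      _ = B ^ s * ((1 - t) * Real.exp t) := by ring
      _ ≤ B ^ s * 1 := mul_le_mul_of_nonneg_left hexp1 hBs.le
      _ = B ^ s := mul_one _
  rw [Real.rpow_neg hB.le, Real.rpow_neg hB'.le]
  have hdiv : (1 - t) / B ^ s ≤ 1 / B' ^ s := by
    rw [div_le_div_iff₀ hBs hB's]
    linarith
  simpa [div_eq_mul_inv] using hdiv

set_option maxHeartbeats 1000000 in
/-- Logarithmic-rate recursion bound (polynomial step sizes with p = 1, θ > 1/2). -/
theorem log_rate_recursion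
    (y : ℕ → ℝ) (θ ℓ₂ α γ : ℝ)
    (hθ : θ ∈ Set.Ioc (1 / 2 : ℝ) 1) (hℓ₂ : 0 < ℓ₂)
    (hα : α ≥ 2 / (θ * (2 * θ - 1) * ℓ₂))
    (hγ : 1 < γ) (hγ2 : γ * Real.log γ ≥ α * θ * ℓ₂)
    (hy : ∀ k, 0 ≤ y k)
    (hrec : ∀ k : ℕ,
      y (k + 1) ≤ (1 - α * θ * ℓ₂ / (((k : ℝ) + γ) * Real.log ((k : ℝ) + γ))) * y k
        + 2 * α * θ * ℓ₂ /
            (((k : ℝ) + γ) * Real.log ((k : ℝ) + γ) ^ (2 * θ / (2 * θ - 1)))) :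
    ∀ k : ℕ,
      y (k + 1) ≤ 4 * Real.log ((k : ℝ) + 1 + γ) ^ (-(1 / (2 * θ - 1))) +
        y 0 * (Real.log ((k : ℝ) + 1 + γ) / Real.log γ) ^ (-(α * θ * ℓ₂)) := by
  obtain ⟨hθ1, hθ2⟩ := hθ
  have h2θ : (0:ℝ) < 2 * θ - 1 := by linarith
  have hθpos : (0:ℝ) < θ := by linarith
  have hden : (0:ℝ) < θ * (2 * θ - 1) * ℓ₂ := mul_pos (mul_pos hθpos h2θ) hℓ₂
  have hαpos : (0:ℝ) < α := lt_of_lt_of_le (div_pos two_pos hden) hα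
  set c := α * θ * ℓ₂ with hc_def
  have hc : (0:ℝ) < c := by rw [hc_def]; exact mul_pos (mul_pos hαpos hθpos) hℓ₂
  set q := 1 / (2 * θ - 1) with hq_def
  have hq : (0:ℝ) < q := by rw [hq_def]; positivity
  have hc2q : 2 * q ≤ c := by
    have h1 : 2 / (θ * (2 * θ - 1) * ℓ₂) * (θ * ℓ₂) ≤ α * (θ * ℓ₂) :=
      mul_le_mul_of_nonneg_right hα (by positivity)
    have h2 : 2 / (θ * (2 * θ - 1) * ℓ₂) * (θ * ℓ₂) = 2 * q := by
      rw [hq_def]; field_simp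
    have h3 : α * (θ * ℓ₂) = c := by rw [hc_def]; ring
    linarith
  have hG : (0:ℝ) < Real.log γ := Real.log_pos hγ
  have hexp : 2 * θ / (2 * θ - 1) = 1 + q := by
    rw [hq_def]; field_simp; ring
  have main : ∀ n : ℕ, y n ≤ 4 * Real.log ((n:ℝ) + γ) ^ (-q)
      + y 0 * (Real.log ((n:ℝ) + γ) / Real.log γ) ^ (-c) := by
    intro n
    induction n with
    | zero =>
      simp only [Nat.cast_zero, zero_add]
      rw [div_self hG.ne', Real.one_rpow]
      have h0 : (0:ℝ) ≤ Real.log γ ^ (-q) := Real.rpow_nonneg hG.le _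
      nlinarith [hy 0]
    | succ k ih =>
      have hrk := hrec k
      push_cast
      set x : ℝ := (k:ℝ) + γ with hx_def
      have hxγ : γ ≤ x := by
        have hk0 : (0:ℝ) ≤ (k:ℝ) := Nat.cast_nonneg k
        rw [hx_def]; linarith
      have hx1 : (1:ℝ) < x := lt_of_lt_of_le hγ hxγ
      have hx0 : (0:ℝ) < x := by linarith
      have hxx : (k:ℝ) + 1 + γ = x + 1 := by rw [hx_def]; ring
      rw [hxx]
      set L := Real.log x with hL_def
      have hL : (0:ℝ) < L := Real.log_pos hx1
      have hLγ : Real.log γ ≤ L := by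
        rw [hL_def]
        exact Real.log_le_log (by linarith) hxγ
      set L' := Real.log (x + 1) with hL'_def
      have hL' : (0:ℝ) < L' := Real.log_pos (by linarith)
      set u := 1 / (x * L) with hu_def
      have hu : (0:ℝ) < u := by rw [hu_def]; positivity
      set a := c / (x * L) with ha_def
      have ha0 : (0:ℝ) < a := by rw [ha_def]; positivity
      have ha1 : a ≤ 1 := by
        rw [ha_def, div_le_one (by positivity)]
        calc c ≤ γ * Real.log γ := hγ2
          _ ≤ x * L := mul_le_mul hxγ hLγ hG.le hx0.le
      clear_value a u L' L x
      have hL'le : L' ≤ L * (1 + u) := by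
        have h1 : L' - L = Real.log ((x + 1) / x) := by
          rw [hL'_def, hL_def, Real.log_div (by linarith) hx0.ne']
        have h2 : Real.log ((x + 1) / x) ≤ (x + 1) / x - 1 :=
          Real.log_le_sub_one_of_pos (by positivity)
        have h3 : (x + 1) / x - 1 = 1 / x := by field_simp; ring
        have hLu : L * u = 1 / x := by
          rw [hu_def]; field_simp
        nlinarith
      have hterm : 2 * α * θ * ℓ₂ / (x * L ^ (2 * θ / (2 * θ - 1)))
          = 2 * a * L ^ (-q) := by
        rw [hexp, Real.rpow_add hL 1 q, Real.rpow_one, Real.rpow_neg hL.le,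
          ha_def, hc_def]
        have hLq : (0:ℝ) < L ^ q := Real.rpow_pos_of_pos hL q
        field_simp
      rw [hterm] at hrk
      -- bound for the first term
      have hb1 : (4 - 2 * a) * L ^ (-q) ≤ 4 * L' ^ (-q) := by
        have hqu : q * u ≤ a / 2 := by
          have e1 : q * u = q / (x * L) := by rw [hu_def]; ring
          have e2 : a / 2 = (c / 2) / (x * L) := by rw [ha_def]; ring
          rw [e1, e2]
          gcongr
          linarith
        have hk1 := aux_key L L' q (a / 2) u hL hL' hu.le hL'le hq.le hqu
          (by linarith)
        nlinarith [Real.rpow_nonneg hL.le (-q), Real.rpow_nonneg hL'.le (-q)]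
      -- bound for the second term
      have hb2 : (1 - a) * (y 0 * (L / Real.log γ) ^ (-c))
          ≤ y 0 * (L' / Real.log γ) ^ (-c) := by
        have hdivle : L' / Real.log γ ≤ (L / Real.log γ) * (1 + u) := by
          have e : L / Real.log γ * (1 + u) = (L * (1 + u)) / Real.log γ := by
            ring
          rw [e]
          gcongr
        have hcu : c * u ≤ a := le_of_eq (by rw [hu_def, ha_def]; ring)
        have hk2 := aux_key (L / Real.log γ) (L' / Real.log γ) c a u
          (by positivity) (by positivity) hu.le hdivle hc.le hcu ha1
        have := mul_le_mul_of_nonneg_left hk2 (hy 0)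
        nlinarith
      have ihs : (1 - a) * y k
          ≤ (1 - a) * (4 * L ^ (-q) + y 0 * (L / Real.log γ) ^ (-c)) :=
        mul_le_mul_of_nonneg_left ih (by linarith)
      nlinarith [hrk]
  intro k
  have h := main (k + 1)
  push_cast at h
  exact h
end
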